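/- Let C be an F_q-linear code of length n, χ a nontrivial additive character of F_q, and w₁, …, w_ℓ ∈ F_q^n fixed reference vectors. Then the Jacobi polynomial of the dual code satisfies the MacWilliams-type identity: J_{C⊥, w₁,…,w_ℓ}({x_a}_{a ∈ F₂^{ℓ+1}}) = (1/|C|) · J_{C, w₁,…,w_ℓ} evaluated at the substitution sending, for each a = (a₁,…,a_{ℓ+1}) ∈ F_q^{ℓ+1}, the variable indexed by (φ(a₁), φ(a₂), …, φ(a_{ℓ+1})) to ∑_{b ∈ F_q} χ(a₁ b) · x_{(φ(b), φ(a₂), …, φ(a_{ℓ+1}))}. -/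

import Mathlib

open scoped Classical

/-- `φ(x) = 1` if `x ≠ 0` and `0` otherwise, valued in `Fin 2`. -/
noncomputable def phi {F : Type*} [Zero F] (x : F) : Fin 2 := if x = 0 then 0 else 1

/-- `N_a(u, w₁, …, w_ℓ)`: the number of coordinates `i` such that
`(φ(uᵢ), φ(w₁ᵢ), …, φ(w_ℓᵢ)) = a`. -/
noncomputable def Njac {F : Type*} [Zero F] {n ℓ : ℕ} (u : Fin n → F)
    (w : Fin ℓ → Fin n → F) (a : Fin (ℓ + 1) → Fin 2) : ℕ :=
  (Finset.univ.filter fun i : Fin n =>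
    (Fin.cons (phi (u i)) (fun j => phi (w j i)) : Fin (ℓ + 1) → Fin 2) = a).card

/-- The Jacobi polynomial of a linear code `C` with respect to `ℓ` reference vectors,
a polynomial in `2^{ℓ+1}` variables indexed by `F₂^{ℓ+1}`. -/
noncomputable def jacPoly {F : Type*} [Field F] [Fintype F] {n ℓ : ℕ}
    (C : Submodule F (Fin n → F)) (w : Fin ℓ → Fin n → F) :
    MvPolynomial (Fin (ℓ + 1) → Fin 2) ℂ :=
  ∑ u : C, ∏ a : Fin (ℓ + 1) → Fin 2, MvPolynomial.X a ^ Njac (u : Fin n → F) w a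

/-!
Expanding the substitution coordinatewise, `σ` sends the monomial of a word `u` to
`∑ v, χ (u ⬝ᵥ v) • (monomial of v)`. Summing over `u ∈ C` and exchanging the sums, the
coefficient of the monomial of `v` becomes the character sum `∑ u ∈ C, χ (u ⬝ᵥ v)`, which is
`|C|` when `v ∈ C⊥` and `0` otherwise, because `u ↦ χ (u ⬝ᵥ v)` is a nontrivial character of `C`
as soon as the functional `u ↦ u ⬝ᵥ v` is nonzero on `C`.
-/

open MvPolynomial

lemma AddChar.map_sum_eq_prod {A M ι : Type*} [AddCommMonoid A] [CommMonoid M] (χ : AddChar A M)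
    (s : Finset ι) (f : ι → A) : χ (∑ i ∈ s, f i) = ∏ i ∈ s, χ (f i) := by
  induction s using Finset.cons_induction with
  | empty => simp
  | cons a s ha ih => rw [Finset.sum_cons, Finset.prod_cons, χ.map_add_eq_mul, ih]

lemma AddChar.sum_comp_linearMap_eq_zero {F V R : Type*} [Field F] [AddCommGroup V] [Module F V]
    [Fintype V] [CommRing R] [IsDomain R] {χ : AddChar F R} (hχ : χ ≠ 1) {f : V →ₗ[F] F}
    (hf : f ≠ 0) : ∑ x, χ (f x) = 0 := by
  refine AddChar.sum_eq_zero_of_ne_one (ψ := χ.compAddMonoidHom f.toAddMonoidHom) ?_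
  obtain ⟨a, ha⟩ := AddChar.ne_one_iff.1 hχ
  obtain ⟨x, rfl⟩ := LinearMap.surjective_of_ne_zero hf a
  exact AddChar.ne_one_iff.2 ⟨x, ha⟩

lemma sum_addChar_dotProduct {F ι R : Type*} [Field F] [Fintype F] [Fintype ι] [DecidableEq ι]
    [CommRing R] [IsDomain R] {χ : AddChar F R} (hχ : χ ≠ 1) (C : Submodule F (ι → F)) (v : ι → F)
    [Decidable (∀ u ∈ C, u ⬝ᵥ v = 0)] :
    ∑ u : C, χ ((u : ι → F) ⬝ᵥ v) = if ∀ u ∈ C, u ⬝ᵥ v = 0 then (Fintype.card C : R) else 0 := by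
  split_ifs with hv
  · simp [fun u : C => hv u u.2]
  · refine AddChar.sum_comp_linearMap_eq_zero hχ
      (f := (dotProductBilin F F).flip v ∘ₗ C.subtype) ?_
    contrapose! hv
    exact fun u hu => LinearMap.congr_fun hv ⟨u, hu⟩

section Jacobi

variable {F : Type*} {n ℓ : ℕ}

noncomputable def jacPattern [Zero F] (w : Fin ℓ → Fin n → F) (x : F) (i : Fin n) :
    Fin (ℓ + 1) → Fin 2 :=
  Fin.cons (phi x) fun j => phi (w j i)

lemma prod_pow_Njac [Zero F] {M : Type*} [CommMonoid M] (u : Fin n → F) (w : Fin ℓ → Fin n → F)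
    (f : (Fin (ℓ + 1) → Fin 2) → M) :
    ∏ a, f a ^ Njac u w a = ∏ i, f (jacPattern w (u i) i) := by
  rw [← Finset.prod_fiberwise' Finset.univ (fun i => jacPattern w (u i) i) f]
  exact Finset.prod_congr rfl fun a _ => by rw [Finset.prod_const]; rfl

noncomputable def jacMonomial [Zero F] (w : Fin ℓ → Fin n → F) (v : Fin n → F) :
    MvPolynomial (Fin (ℓ + 1) → Fin 2) ℂ :=
  ∏ i, X (jacPattern w (v i) i)

variable [Field F] [Fintype F]

lemma jacPoly_eq_sum_jacMonomial (C : Submodule F (Fin n → F)) (w : Fin ℓ → Fin n → F) :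
    jacPoly C w = ∑ u : C, jacMonomial w u := by
  simp only [jacPoly, jacMonomial, prod_pow_Njac]

variable {χ : AddChar F ℂ} {w : Fin ℓ → Fin n → F}
  {σ : (Fin (ℓ + 1) → Fin 2) → MvPolynomial (Fin (ℓ + 1) → Fin 2) ℂ}

lemma apply_jacPattern_eq_sum
    (hσ : ∀ a : Fin (ℓ + 1) → F, σ (fun i => phi (a i)) =
      ∑ b : F, χ (a 0 * b) • X (fun i : Fin (ℓ + 1) => if i = 0 then phi b else phi (a i)))
    (x : F) (i : Fin n) :
    σ (jacPattern w x i) = ∑ b, χ (x * b) • X (jacPattern w b i) := by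
  have hx : (fun k => phi ((Fin.cons x fun j => w j i : Fin (ℓ + 1) → F) k)) =
      jacPattern w x i := by
    funext k; cases k using Fin.cases <;> rfl
  have hb (b : F) : (fun k => if k = 0 then phi b else
      phi ((Fin.cons x fun j => w j i : Fin (ℓ + 1) → F) k)) = jacPattern w b i := by
    funext k; cases k using Fin.cases <;> simp [jacPattern, Fin.succ_ne_zero]
  simpa only [hx, hb, Fin.cons_zero] using hσ (Fin.cons x fun j => w j i)

lemma aeval_jacMonomial
    (hσ : ∀ x i, σ (jacPattern w x i) = ∑ b, χ (x * b) • X (jacPattern w b i)) (u : Fin n → F) :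
    aeval σ (jacMonomial w u) = ∑ v, χ (u ⬝ᵥ v) • jacMonomial w v := by
  simp only [jacMonomial, map_prod, aeval_X, hσ, Fintype.prod_sum, Finset.prod_smul, dotProduct,
    AddChar.map_sum_eq_prod]

end Jacobi

/-- MacWilliams type identity for Jacobi polynomials with multiple reference vectors. -/
theorem jacPoly_dual_macwilliams {F : Type*} [Field F] [Fintype F] {n ℓ : ℕ}
    (C Cperp : Submodule F (Fin n → F))
    (hperp : ∀ v, v ∈ Cperp ↔ ∀ u ∈ C, ∑ i, u i * v i = 0)
    (χ : AddChar F ℂ) (hχ : ∃ x, χ x ≠ 1)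
    (w : Fin ℓ → Fin n → F)
    (σ : (Fin (ℓ + 1) → Fin 2) → MvPolynomial (Fin (ℓ + 1) → Fin 2) ℂ)
    (hσ : ∀ a : Fin (ℓ + 1) → F,
      σ (fun i => phi (a i)) =
        ∑ b : F, χ (a 0 * b) •
          MvPolynomial.X (fun i : Fin (ℓ + 1) => if i = 0 then phi b else phi (a i))) :
    jacPoly Cperp w = (Fintype.card C : ℂ)⁻¹ • MvPolynomial.aeval σ (jacPoly C w) := by
  have hχ : χ ≠ 1 := AddChar.ne_one_iff.2 hχ
  have hperp : ∀ v, v ∈ Cperp ↔ ∀ u ∈ C, u ⬝ᵥ v = 0 := hperp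
  rw [eq_inv_smul_iff₀ (Nat.cast_ne_zero.2 Fintype.card_ne_zero)]
  calc (Fintype.card C : ℂ) • jacPoly Cperp w
      = ∑ v, (if v ∈ Cperp then (Fintype.card C : ℂ) else 0) • jacMonomial w v := by
        simp_rw [jacPoly_eq_sum_jacMonomial, Finset.smul_sum, ite_smul, zero_smul,
          ← Finset.sum_filter]
        rw [← Finset.sum_subtype_eq_sum_filter, Finset.subtype_univ]
    _ = ∑ v, (∑ u : C, χ ((u : Fin n → F) ⬝ᵥ v)) • jacMonomial w v := by
        simp only [sum_addChar_dotProduct hχ, ← hperp]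
    _ = aeval σ (jacPoly C w) := by
        simp_rw [jacPoly_eq_sum_jacMonomial, map_sum,
          aeval_jacMonomial (apply_jacPattern_eq_sum hσ), Finset.sum_smul]
        exact Finset.sum_comm
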